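/- Let ζ > 0 and let (h, w) ∈ Σ([0,ζ]) be a one-dimensional snake with duration ζ. Then the snake-pseudometric d_{h,w} is a continuous pseudometric on [0,ζ] (i.e. d_{h,w} is continuous on [0,ζ]², nonnegative, symmetric, vanishes on the diagonal and satisfies the triangle inequality), and d_{h,w} satisfies the four-point inequality. -/

import Mathlib

open scoped NNReal

/-- `m_h(s1, s2) = min { h u : u ∈ [s1 ∧ s2, s1 ∨ s2] }` for a lifetime process `h`. -/
noncomputable def snakeInf (h : C(ℝ≥0, ℝ≥0)) (s1 s2 : ℝ≥0) : ℝ≥0 :=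
  sInf ((fun u => h u) '' Set.uIcc s1 s2)

/-- A (`E`-valued) snake: a pair `(h, w)` with `h ∈ C⁰(ℝ≥0, ℝ≥0)`, `w ∈ C⁰(ℝ≥0, C⁰(ℝ≥0, E))`
such that (a) `w s r = w s (h s)` for `r ≥ h s`, and (b) the snake property:
`w s1 r = w s2 r` for all `r ≤ m_h(s1, s2)`. -/
def IsSnake {E : Type*} [TopologicalSpace E] (h : C(ℝ≥0, ℝ≥0)) (w : C(ℝ≥0, C(ℝ≥0, E))) : Prop :=
  (∀ s r, h s ≤ r → w s r = w s (h s)) ∧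
  ∀ s1 s2 r, r ≤ snakeInf h s1 s2 → w s1 r = w s2 r

/-- `M_{h,w}(s1,s2) = min ( min {w_{s1} r : r ≥ m_h(s1,s2)}, min {w_{s2} r : r ≥ m_h(s1,s2)} )`. -/
noncomputable def snakeM (h : C(ℝ≥0, ℝ≥0)) (w : C(ℝ≥0, C(ℝ≥0, ℝ))) (s1 s2 : ℝ≥0) : ℝ :=
  min (sInf ((fun r => w s1 r) '' Set.Ici (snakeInf h s1 s2)))
      (sInf ((fun r => w s2 r) '' Set.Ici (snakeInf h s1 s2)))

/-- The snake-pseudometric `d_{h,w}(s1,s2) = ŵ_{s1} + ŵ_{s2} - 2 M_{h,w}(s1,s2)`. -/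
noncomputable def snakeDist (h : C(ℝ≥0, ℝ≥0)) (w : C(ℝ≥0, C(ℝ≥0, ℝ))) (s1 s2 : ℝ≥0) : ℝ :=
  w s1 (h s1) + w s2 (h s2) - 2 * snakeM h w s1 s2

open Set

section Aux

variable (h : C(ℝ≥0, ℝ≥0)) (w : C(ℝ≥0, C(ℝ≥0, ℝ)))

-- basic snakeInf lemmas
lemma snakeInf_le_left (s1 s2 : ℝ≥0) : snakeInf h s1 s2 ≤ h s1 :=
  csInf_le (OrderBot.bddBelow _) ⟨s1, Set.left_mem_uIcc, rfl⟩

lemma snakeInf_le_right (s1 s2 : ℝ≥0) : snakeInf h s1 s2 ≤ h s2 :=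
  csInf_le (OrderBot.bddBelow _) ⟨s2, Set.right_mem_uIcc, rfl⟩

lemma snakeInf_comm (s1 s2 : ℝ≥0) : snakeInf h s1 s2 = snakeInf h s2 s1 := by
  rw [snakeInf, snakeInf, Set.uIcc_comm]

lemma snakeInf_self (s : ℝ≥0) : snakeInf h s s = h s := by
  simp [snakeInf, Set.uIcc_self]

lemma min_snakeInf_le (s1 s2 s3 : ℝ≥0) :
    min (snakeInf h s1 s2) (snakeInf h s2 s3) ≤ snakeInf h s1 s3 := by
  have hne : ((fun u => h u) '' Set.uIcc s1 s3).Nonempty :=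
    ⟨h s1, s1, Set.left_mem_uIcc, rfl⟩
  refine le_csInf hne ?_
  rintro _ ⟨u, hu, rfl⟩
  have hu₀ : min s1 s3 ≤ u ∧ u ≤ max s1 s3 := Set.mem_Icc.mp hu
  have hu' : u ∈ Set.uIcc s1 s2 ∨ u ∈ Set.uIcc s2 s3 := by
    have h1 : ∀ a b : ℝ≥0, min a b ≤ u ∧ u ≤ max a b → u ∈ Set.uIcc a b :=
      fun a b hab => Set.mem_Icc.mpr hab
    rcases le_total u s2 with hc | hc <;>
      rcases le_total s1 s3 with hd | hd <;>
      [ (left; exact h1 _ _ ⟨le_trans (min_le_left _ _) (by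
          rw [min_eq_left hd] at hu₀; exact hu₀.1), le_trans hc (le_max_right _ _)⟩);
        (right; exact h1 _ _ ⟨le_trans (min_le_right _ _) (by
          rw [min_eq_right hd] at hu₀; exact hu₀.1), le_trans hc (le_max_left _ _)⟩);
        (right; exact h1 _ _ ⟨le_trans (min_le_left _ _) hc, le_trans (by
          rw [max_eq_right hd] at hu₀; exact hu₀.2) (le_max_right _ _)⟩);
        (left; exact h1 _ _ ⟨le_trans (min_le_right _ _) hc, le_trans (by
          rw [max_eq_left hd] at hu₀; exact hu₀.2) (le_max_left _ _)⟩)]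
  rcases hu' with hu | hu
  · exact (min_le_left _ _).trans (csInf_le (OrderBot.bddBelow _) ⟨u, hu, rfl⟩)
  · exact (min_le_right _ _).trans (csInf_le (OrderBot.bddBelow _) ⟨u, hu, rfl⟩)

variable (hsnake : IsSnake h w)
include hsnake

-- image over Ici is image over a compact interval
lemma image_Ici_eq (s m : ℝ≥0) :
    (fun r => w s r) '' Set.Ici m = (fun r => w s r) '' Set.Icc m (max m (h s)) := by
  apply Set.Subset.antisymm
  · rintro _ ⟨r, hr, rfl⟩
    rcases le_total r (max m (h s)) with hrK | hrK
    · exact ⟨r, ⟨hr, hrK⟩, rfl⟩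
    · refine ⟨max m (h s), ⟨le_max_left _ _, le_rfl⟩, ?_⟩
      show w s (max m (h s)) = w s r
      rw [hsnake.1 s (max m (h s)) (le_max_right _ _),
        hsnake.1 s r ((le_max_right _ _).trans hrK)]
  · exact Set.image_mono fun r hr => hr.1

lemma bddBelow_image_Ici (s m : ℝ≥0) : BddBelow ((fun r => w s r) '' Set.Ici m) := by
  rw [image_Ici_eq h w hsnake]
  exact (isCompact_Icc.image_of_continuousOn (w s).continuous.continuousOn).bddBelow

omit hsnake in
lemma nonempty_image_Ici (s m : ℝ≥0) : ((fun r => w s r) '' Set.Ici m).Nonempty :=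
  ⟨w s m, m, Set.self_mem_Ici, rfl⟩

lemma sInf_Ici_le (s m r : ℝ≥0) (hr : m ≤ r) :
    sInf ((fun r => w s r) '' Set.Ici m) ≤ w s r :=
  csInf_le (bddBelow_image_Ici h w hsnake s m) ⟨r, hr, rfl⟩

lemma sInf_Ici_mono (s : ℝ≥0) {m m' : ℝ≥0} (hm : m ≤ m') :
    sInf ((fun r => w s r) '' Set.Ici m) ≤ sInf ((fun r => w s r) '' Set.Ici m') :=
  csInf_le_csInf (bddBelow_image_Ici h w hsnake s m) (nonempty_image_Ici w s m')
    (Set.image_mono (Set.Ici_subset_Ici.2 hm))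

lemma sInf_Ici_le_endpoint (s m : ℝ≥0) :
    sInf ((fun r => w s r) '' Set.Ici m) ≤ w s (h s) := by
  have := sInf_Ici_le h w hsnake s m (max m (h s)) (le_max_left _ _)
  rwa [hsnake.1 s (max m (h s)) (le_max_right _ _)] at this

lemma sInf_Ici_endpoint (s : ℝ≥0) :
    sInf ((fun r => w s r) '' Set.Ici (h s)) = w s (h s) := by
  refine le_antisymm (sInf_Ici_le h w hsnake s _ _ le_rfl) ?_
  refine le_csInf (nonempty_image_Ici w s _) ?_
  rintro _ ⟨r, hr, rfl⟩
  show w s (h s) ≤ w s r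
  rw [hsnake.1 s r hr]

-- splitting the infimum
lemma min_le_sInf_Ici (s : ℝ≥0) {m m' : ℝ≥0} (hmm' : m ≤ m') :
    min (sInf ((fun r => w s r) '' Set.Icc m m'))
      (sInf ((fun r => w s r) '' Set.Ici m')) ≤
    sInf ((fun r => w s r) '' Set.Ici m) := by
  refine le_csInf (nonempty_image_Ici w s m) ?_
  rintro _ ⟨r, hr, rfl⟩
  rcases le_total r m' with hrm' | hrm'
  · refine (min_le_left _ _).trans (csInf_le ?_ ⟨r, ⟨hr, hrm'⟩, rfl⟩)
    exact (isCompact_Icc.image_of_continuousOn (w s).continuous.continuousOn).bddBelow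
  · exact (min_le_right _ _).trans (sInf_Ici_le h w hsnake s m' r hrm')

lemma sInf_Ici_le_sInf_Icc (s : ℝ≥0) {m m' : ℝ≥0} (hmm' : m ≤ m') :
    sInf ((fun r => w s r) '' Set.Ici m) ≤ sInf ((fun r => w s r) '' Set.Icc m m') := by
  refine le_csInf ((Set.nonempty_Icc.2 hmm').image _) ?_
  rintro _ ⟨r, hr, rfl⟩
  exact sInf_Ici_le h w hsnake s m r hr.1

-- snakeM lemmas
lemma snakeM_comm (s1 s2 : ℝ≥0) : snakeM h w s1 s2 = snakeM h w s2 s1 := by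
  rw [snakeM, snakeM, snakeInf_comm, min_comm]

omit hsnake in
lemma snakeM_le_fst (s1 s2 : ℝ≥0) :
    snakeM h w s1 s2 ≤ sInf ((fun r => w s1 r) '' Set.Ici (snakeInf h s1 s2)) :=
  min_le_left _ _

lemma snakeM_le_endpoint_left (s1 s2 : ℝ≥0) : snakeM h w s1 s2 ≤ w s1 (h s1) :=
  (min_le_left _ _).trans (sInf_Ici_le_endpoint h w hsnake s1 _)

lemma snakeM_le_endpoint_right (s1 s2 : ℝ≥0) : snakeM h w s1 s2 ≤ w s2 (h s2) :=
  (min_le_right _ _).trans (sInf_Ici_le_endpoint h w hsnake s2 _)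

lemma snakeM_self (s : ℝ≥0) : snakeM h w s s = w s (h s) := by
  rw [snakeM, snakeInf_self, sInf_Ici_endpoint h w hsnake, min_self]

-- the key lemma, asymmetric version
lemma min_snakeM_le_aux (s1 s2 s3 : ℝ≥0)
    (hm : snakeInf h s1 s2 ≤ snakeInf h s2 s3) :
    min (snakeM h w s1 s2) (snakeM h w s2 s3) ≤ snakeM h w s1 s3 := by
  set m12 := snakeInf h s1 s2 with hm12
  set m23 := snakeInf h s2 s3 with hm23
  have hm13 : m12 ≤ snakeInf h s1 s3 := by
    have := min_snakeInf_le h s1 s2 s3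
    rwa [min_eq_left hm] at this
  -- A s1 m12 ≥ M12
  have h1 : snakeM h w s1 s2 ≤ sInf ((fun r => w s1 r) '' Set.Ici m12) := min_le_left _ _
  -- A s3 m12 ≥ min (M12, M23)
  have h3 : min (snakeM h w s1 s2) (snakeM h w s2 s3) ≤
      sInf ((fun r => w s3 r) '' Set.Ici m12) := by
    refine le_trans ?_ (min_le_sInf_Ici h w hsnake s3 hm)
    apply le_min
    · refine (min_le_left _ _).trans ?_
      have himg : (fun r => w s3 r) '' Set.Icc m12 m23 = (fun r => w s2 r) '' Set.Icc m12 m23 := by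
        apply Set.image_congr
        intro r hr
        exact (hsnake.2 s2 s3 r hr.2).symm
      rw [himg]
      refine le_trans ?_ (sInf_Ici_le_sInf_Icc h w hsnake s2 hm)
      exact min_le_right _ _
    · exact (min_le_right _ _).trans (min_le_right _ _)
  calc min (snakeM h w s1 s2) (snakeM h w s2 s3)
      ≤ min (sInf ((fun r => w s1 r) '' Set.Ici m12))
          (sInf ((fun r => w s3 r) '' Set.Ici m12)) := by
        apply le_min
        · exact (min_le_left _ _).trans h1
        · exact h3
    _ ≤ snakeM h w s1 s3 := by
        apply le_min
        · exact (min_le_left _ _).trans (sInf_Ici_mono h w hsnake s1 hm13)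
        · exact (min_le_right _ _).trans (sInf_Ici_mono h w hsnake s3 hm13)

lemma min_snakeM_le (s1 s2 s3 : ℝ≥0) :
    min (snakeM h w s1 s2) (snakeM h w s2 s3) ≤ snakeM h w s1 s3 := by
  rcases le_total (snakeInf h s1 s2) (snakeInf h s2 s3) with hm | hm
  · exact min_snakeM_le_aux h w hsnake s1 s2 s3 hm
  · have := min_snakeM_le_aux h w hsnake s3 s2 s1 (by rwa [snakeInf_comm h s3 s2, snakeInf_comm h s2 s1])
    rwa [snakeM_comm h w hsnake s3 s2, snakeM_comm h w hsnake s2 s1,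
      snakeM_comm h w hsnake s3 s1, min_comm] at this

end Aux

-- arithmetic four-point lemma
lemma fourAux (a b c d e f : ℝ) (h1 : min c e ≤ a) (h2 : min d f ≤ a)
    (h3 : min c d ≤ b) (h4 : min e f ≤ b) : min (c + f) (d + e) ≤ a + b := by
  rw [min_le_iff] at h1 h2 h3 h4 ⊢
  rcases h1 with h1 | h1 <;> rcases h2 with h2 | h2 <;>
    rcases h3 with h3 | h3 <;> rcases h4 with h4 | h4 <;>
    rcases le_total (c + f) (d + e) with g | g <;>
    first | (left; linarith) | (right; linarith)

-- affine parametrization of Icc in ℝ≥0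
lemma image_affine_Icc {a b : ℝ≥0} (hab : a ≤ b) :
    (fun t : ℝ≥0 => a + t * (b - a)) '' Set.Icc 0 1 = Set.Icc a b := by
  apply Set.Subset.antisymm
  · rintro _ ⟨t, ht, rfl⟩
    constructor
    · exact le_self_add
    · calc a + t * (b - a) ≤ a + 1 * (b - a) := by
            exact add_le_add_right (mul_le_mul_left ht.2 _) a
        _ = a + (b - a) := by rw [one_mul]
        _ = b := add_tsub_cancel_of_le hab
  · rintro u ⟨hau, hub⟩
    rcases eq_or_lt_of_le hab with rfl | hlt
    · exact ⟨0, ⟨le_rfl, zero_le_one⟩, by simp [le_antisymm hub hau]⟩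
    · have hba : b - a ≠ 0 := by
        rw [← pos_iff_ne_zero]
        exact tsub_pos_of_lt hlt
      refine ⟨(u - a) / (b - a), ⟨zero_le, ?_⟩, ?_⟩
      · rw [div_le_one hba.bot_lt]
        exact tsub_le_tsub_right hub a
      · show a + (u - a) / (b - a) * (b - a) = u
        rw [div_mul_cancel₀ _ hba, add_tsub_cancel_of_le hau]

-- joint continuity of evaluation of w
lemma w_eval_continuous (w : C(ℝ≥0, C(ℝ≥0, ℝ))) :
    Continuous fun p : ℝ≥0 × ℝ≥0 => w p.1 p.2 := by
  have : Continuous fun p : ℝ≥0 × ℝ≥0 => ((w p.1 : C(ℝ≥0, ℝ)), p.2) :=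
    ((w.continuous.comp continuous_fst)).prodMk continuous_snd
  exact ContinuousEval.continuous_eval.comp this

lemma snakeInf_continuous (h : C(ℝ≥0, ℝ≥0)) :
    Continuous fun p : ℝ≥0 × ℝ≥0 => snakeInf h p.1 p.2 := by
  have heq : ∀ p : ℝ≥0 × ℝ≥0, snakeInf h p.1 p.2 =
      sInf ((fun t => h (min p.1 p.2 + t * (max p.1 p.2 - min p.1 p.2))) '' Set.Icc 0 1) := by
    intro p
    rw [snakeInf]
    congr 1
    rw [← Set.image_image (fun u => h u)
      (fun t => min p.1 p.2 + t * (max p.1 p.2 - min p.1 p.2)),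
      image_affine_Icc (min_le_max)]
    rfl
  simp only [heq]
  apply IsCompact.continuous_sInf (isCompact_Icc (a := (0:ℝ≥0)) (b := 1))
  apply h.continuous.comp
  have c1 : Continuous fun q : (ℝ≥0 × ℝ≥0) × ℝ≥0 => min q.1.1 q.1.2 :=
    (continuous_fst.fst.min continuous_fst.snd)
  have c2 : Continuous fun q : (ℝ≥0 × ℝ≥0) × ℝ≥0 => max q.1.1 q.1.2 :=
    (continuous_fst.fst.max continuous_fst.snd)
  exact c1.add (continuous_snd.mul (c2.sub c1))

lemma ftil_continuous (w : C(ℝ≥0, C(ℝ≥0, ℝ))) (K0 : ℝ≥0) :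
    Continuous fun p : ℝ≥0 × ℝ≥0 => sInf ((fun r => w p.1 r) '' Set.Icc (min p.2 K0) K0) := by
  have heq : ∀ p : ℝ≥0 × ℝ≥0,
      sInf ((fun r => w p.1 r) '' Set.Icc (min p.2 K0) K0) =
      sInf ((fun t => w p.1 (min p.2 K0 + t * (K0 - min p.2 K0))) '' Set.Icc 0 1) := by
    intro p
    congr 1
    rw [← Set.image_image (fun r => w p.1 r)
      (fun t => min p.2 K0 + t * (K0 - min p.2 K0)),
      image_affine_Icc (min_le_right _ _)]
  simp only [heq]
  apply IsCompact.continuous_sInf (isCompact_Icc (a := (0:ℝ≥0)) (b := 1))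
  show Continuous fun q : (ℝ≥0 × ℝ≥0) × ℝ≥0 =>
    (fun p : ℝ≥0 × ℝ≥0 => w p.1 p.2)
      (q.1.1, min q.1.2 K0 + q.2 * (K0 - min q.1.2 K0))
  apply (w_eval_continuous w).comp
  have c1 : Continuous fun q : (ℝ≥0 × ℝ≥0) × ℝ≥0 => min q.1.2 K0 :=
    (continuous_fst.snd.min continuous_const)
  exact continuous_fst.fst.prodMk
    (c1.add (continuous_snd.mul ((continuous_const (y := K0)).sub c1)))

/-- Lemma 2.29 of the paper. For a one-dimensional snake `(h, w)` with
duration `ζ`, the snake-pseudometric `d_{h,w}` is a continuous pseudometric on `[0, ζ]`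
satisfying the four-point inequality. -/
theorem stmt8 (ζ : ℝ≥0) (hζ : 0 < ζ)
    (h : C(ℝ≥0, ℝ≥0)) (w : C(ℝ≥0, C(ℝ≥0, ℝ)))
    (hsnake : IsSnake h w) (hdur : ∀ s, ζ ≤ s → h s = 0) :
    ContinuousOn (fun p : ℝ≥0 × ℝ≥0 => snakeDist h w p.1 p.2)
      (Set.Icc 0 ζ ×ˢ Set.Icc 0 ζ) ∧
    (∀ s1 ∈ Set.Icc (0:ℝ≥0) ζ, ∀ s2 ∈ Set.Icc (0:ℝ≥0) ζ, 0 ≤ snakeDist h w s1 s2) ∧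
    (∀ s1 ∈ Set.Icc (0:ℝ≥0) ζ, snakeDist h w s1 s1 = 0) ∧
    (∀ s1 ∈ Set.Icc (0:ℝ≥0) ζ, ∀ s2 ∈ Set.Icc (0:ℝ≥0) ζ,
      snakeDist h w s1 s2 = snakeDist h w s2 s1) ∧
    (∀ s1 ∈ Set.Icc (0:ℝ≥0) ζ, ∀ s2 ∈ Set.Icc (0:ℝ≥0) ζ, ∀ s3 ∈ Set.Icc (0:ℝ≥0) ζ,
      snakeDist h w s1 s3 ≤ snakeDist h w s1 s2 + snakeDist h w s2 s3) ∧
    (∀ s1 ∈ Set.Icc (0:ℝ≥0) ζ, ∀ s2 ∈ Set.Icc (0:ℝ≥0) ζ, ∀ s3 ∈ Set.Icc (0:ℝ≥0) ζ,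
      ∀ s4 ∈ Set.Icc (0:ℝ≥0) ζ,
      snakeDist h w s1 s2 + snakeDist h w s3 s4 ≤
        max (snakeDist h w s1 s3 + snakeDist h w s2 s4)
            (snakeDist h w s1 s4 + snakeDist h w s2 s3)) := by
  refine ⟨?_, ?_, ?_, ?_, ?_, ?_⟩
  · -- continuity
    -- bound on h
    obtain ⟨x0, -, hx0⟩ := isCompact_Icc.exists_isMaxOn
      (Set.nonempty_Icc.2 (zero_le : (0:ℝ≥0) ≤ ζ)) h.continuous.continuousOn
    set K0 := h x0 with hK0def
    have hK0 : ∀ s, h s ≤ K0 := by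
      intro s
      rcases le_total ζ s with hs | hs
      · rw [hdur s hs]; exact zero_le
      · exact hx0 ⟨zero_le, hs⟩
    have hIciIcc : ∀ (s : ℝ≥0) (m : ℝ≥0), m ≤ K0 →
        (fun r => w s r) '' Set.Ici m = (fun r => w s r) '' Set.Icc m K0 := by
      intro s m hm
      apply Set.Subset.antisymm
      · rintro _ ⟨r, hr, rfl⟩
        rcases le_total r K0 with hrK | hrK
        · exact ⟨r, ⟨hr, hrK⟩, rfl⟩
        · refine ⟨max m (h s), ⟨le_max_left _ _, max_le hm (hK0 s)⟩, ?_⟩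
          show w s (max m (h s)) = w s r
          rw [hsnake.1 s (max m (h s)) (le_max_right _ _),
            hsnake.1 s r ((hK0 s).trans hrK)]
      · exact Set.image_mono fun r hr => hr.1
    have hMre : ∀ p : ℝ≥0 × ℝ≥0, snakeM h w p.1 p.2 =
        min (sInf ((fun r => w p.1 r) '' Set.Icc (min (snakeInf h p.1 p.2) K0) K0))
            (sInf ((fun r => w p.2 r) '' Set.Icc (min (snakeInf h p.1 p.2) K0) K0)) := by
      intro p
      have hmle : snakeInf h p.1 p.2 ≤ K0 := (snakeInf_le_left h p.1 p.2).trans (hK0 p.1)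
      rw [snakeM, min_eq_left hmle, hIciIcc p.1 _ hmle, hIciIcc p.2 _ hmle]
    have hrw : (fun p : ℝ≥0 × ℝ≥0 => snakeDist h w p.1 p.2) = fun p =>
        w p.1 (h p.1) + w p.2 (h p.2) - 2 *
          min ((fun q : ℝ≥0 × ℝ≥0 => sInf ((fun r => w q.1 r) '' Set.Icc (min q.2 K0) K0))
                 (p.1, snakeInf h p.1 p.2))
              ((fun q : ℝ≥0 × ℝ≥0 => sInf ((fun r => w q.1 r) '' Set.Icc (min q.2 K0) K0))
                 (p.2, snakeInf h p.1 p.2)) := by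
      funext p
      rw [snakeDist, hMre p]
    rw [hrw]
    have econt : Continuous fun s : ℝ≥0 => w s (h s) :=
      (w_eval_continuous w).comp (continuous_id.prodMk h.continuous)
    have hG := snakeInf_continuous h
    have hF := ftil_continuous w K0
    apply Continuous.continuousOn
    refine Continuous.sub ?_ ?_
    · exact (econt.comp continuous_fst).add (econt.comp continuous_snd)
    · refine continuous_const.mul (Continuous.min ?_ ?_)
      · exact hF.comp (continuous_fst.prodMk hG)
      · exact hF.comp (continuous_snd.prodMk hG)
  · -- nonneg
    intro s1 _ s2 _
    have h1 := snakeM_le_endpoint_left h w hsnake s1 s2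
    have h2 := snakeM_le_endpoint_right h w hsnake s1 s2
    rw [snakeDist]
    linarith
  · -- diagonal
    intro s1 _
    rw [snakeDist, snakeM_self h w hsnake]
    ring
  · -- symmetry
    intro s1 _ s2 _
    rw [snakeDist, snakeDist, snakeM_comm h w hsnake]
    ring
  · -- triangle
    intro s1 _ s2 _ s3 _
    have hkey := min_snakeM_le h w hsnake s1 s2 s3
    have h1 := snakeM_le_endpoint_right h w hsnake s1 s2
    have h2 := snakeM_le_endpoint_left h w hsnake s2 s3
    rw [snakeDist, snakeDist, snakeDist]
    rcases le_total (snakeM h w s1 s2) (snakeM h w s2 s3) with hc | hc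
    · rw [min_eq_left hc] at hkey; linarith
    · rw [min_eq_right hc] at hkey; linarith
  · -- four-point
    intro s1 _ s2 _ s3 _ s4 _
    have k1 : min (snakeM h w s1 s3) (snakeM h w s2 s3) ≤ snakeM h w s1 s2 := by
      have := min_snakeM_le h w hsnake s1 s3 s2
      rwa [snakeM_comm h w hsnake s3 s2] at this
    have k2 : min (snakeM h w s1 s4) (snakeM h w s2 s4) ≤ snakeM h w s1 s2 := by
      have := min_snakeM_le h w hsnake s1 s4 s2
      rwa [snakeM_comm h w hsnake s4 s2] at this
    have k3 : min (snakeM h w s1 s3) (snakeM h w s1 s4) ≤ snakeM h w s3 s4 := by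
      have := min_snakeM_le h w hsnake s3 s1 s4
      rwa [snakeM_comm h w hsnake s3 s1] at this
    have k4 : min (snakeM h w s2 s3) (snakeM h w s2 s4) ≤ snakeM h w s3 s4 := by
      have := min_snakeM_le h w hsnake s3 s2 s4
      rwa [snakeM_comm h w hsnake s3 s2] at this
    have hfour := fourAux (snakeM h w s1 s2) (snakeM h w s3 s4)
      (snakeM h w s1 s3) (snakeM h w s1 s4) (snakeM h w s2 s3) (snakeM h w s2 s4)
      k1 k2 k3 k4
    rw [le_max_iff]
    rcases min_le_iff.mp hfour with hc | hc
    · left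
      rw [snakeDist, snakeDist, snakeDist, snakeDist]
      linarith
    · right
      rw [snakeDist, snakeDist, snakeDist, snakeDist]
      linarith
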